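/- arXiv:1003.2322 — 7 statements merged into one kernel-verified Lean document; each statement's English description precedes it below -/
import Mathlib

section
/- Let ⟨·,·⟩₁ be a nondegenerate symmetric bilinear form of signature (−,+,…,+) on a finite-dimensional real vector space V with norm ‖·‖, and let 𝔗 be the closed cone of future-pointing causal vectors. Then there exists a constant C < ∞ such that −⟨v,v⟩₁ ≤ C ‖v‖ dist(v, ∂𝔗) for all v ∈ 𝔗. -/
/-!
Because `B` is positive definite on `e^⊥`, the functional `-B · e` is positive on the cone minus
the origin, so by compactness of its trace on the unit sphere `δ ‖v‖ ≤ -B v e` on the cone.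
Together with `|B x y| ≤ M ‖x‖ ‖y‖` this shows that, for a suitable `C`, the ball of radius
`r = -B v v / (C ‖v‖)` around a cone vector `v` stays in the cone: moving by `d` with `‖d‖ ≤ r`
raises `B v v` by at most `3 M ‖v‖ r` and `B v e` by at most `M r ‖e‖`. Hence the frontier is at
distance at least `r` from `v`.
-/

open Metric Set

theorem Metric.le_infDist_frontier_of_ball_subset {X : Type*} [PseudoMetricSpace X] {s : Set X}
    {x : X} {r : ℝ} (hs : (frontier s).Nonempty) (h : ball x r ⊆ s) :
    r ≤ infDist x (frontier s) :=
  (le_infDist hs).2 fun _ hy => not_lt.1 fun hlt =>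
    hy.2 (interior_maximal h isOpen_ball (mem_ball'.2 hlt))

namespace LinearMap.BilinForm

variable {V : Type*} [NormedAddCommGroup V] [NormedSpace ℝ V] (B : LinearMap.BilinForm ℝ V)

theorem exists_pos_bound [FiniteDimensional ℝ V] :
    ∃ M > 0, ∀ x y : V, |B x y| ≤ M * ‖x‖ * ‖y‖ := by
  simpa using B.toContinuousBilinearMap.isBoundedBilinearMap.bound

theorem continuous_apply_self [FiniteDimensional ℝ V] : Continuous fun v => B v v :=
  B.toContinuousBilinearMap.continuous₂.comp (continuous_id.prodMk continuous_id)

theorem apply_add_self_le (hsymm : ∀ x y : V, B x y = B y x) {M : ℝ} (hM₀ : 0 ≤ M)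
    (hM : ∀ x y : V, |B x y| ≤ M * ‖x‖ * ‖y‖) {v d : V} (hd : ‖d‖ ≤ ‖v‖) :
    B (v + d) (v + d) ≤ B v v + 3 * M * ‖v‖ * ‖d‖ := by
  have hvd := (le_abs_self _).trans (hM v d)
  have hdd := (le_abs_self _).trans (hM d d)
  have hexp : B (v + d) (v + d) = B v v + 2 * B v d + B d d := by
    simp only [map_add, LinearMap.add_apply, hsymm d v]; ring
  have : M * ‖d‖ * ‖d‖ ≤ M * ‖v‖ * ‖d‖ := by gcongr
  linarith

/-- The cone `𝔗`, with the future being the side of `e`. -/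
def causalCone (e : V) : Set V := {v | B v v ≤ 0 ∧ B v e ≤ 0}

variable {B} {e : V}

theorem smul_mem_causalCone {c : ℝ} (hc : 0 ≤ c) {v : V} (hv : v ∈ B.causalCone e) :
    c • v ∈ B.causalCone e := by
  simp only [causalCone, mem_ofPred_eq, map_smul, LinearMap.smul_apply, smul_eq_mul] at hv ⊢
  exact ⟨mul_nonpos_of_nonneg_of_nonpos hc (mul_nonpos_of_nonneg_of_nonpos hc hv.1),
    mul_nonpos_of_nonneg_of_nonpos hc hv.2⟩

theorem isClosed_causalCone [FiniteDimensional ℝ V] : IsClosed (B.causalCone e) :=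
  (isClosed_le B.continuous_apply_self continuous_const).inter
    (isClosed_le (B.flip e).continuous_of_finiteDimensional continuous_const)

theorem nonempty_frontier_causalCone (he : B e e < 0) : (frontier (B.causalCone e)).Nonempty := by
  refine nonempty_frontier_iff.2 ⟨⟨0, by simp [causalCone]⟩, fun h => ?_⟩
  have : -e ∈ B.causalCone e := h ▸ mem_univ _
  simp only [causalCone, mem_ofPred_eq, map_neg, LinearMap.neg_apply] at this
  linarith [this.2]

theorem apply_lt_zero_of_mem_causalCone (hsymm : ∀ x y : V, B x y = B y x)
    (hpos : ∀ v : V, B e v = 0 → v ≠ 0 → 0 < B v v) {v : V} (hv : v ∈ B.causalCone e)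
    (hv₀ : v ≠ 0) : B v e < 0 :=
  hv.2.lt_of_ne fun h => (hpos v (by rw [hsymm, h]) hv₀).not_ge hv.1

theorem exists_pos_mul_norm_le_neg_apply [FiniteDimensional ℝ V]
    (hsymm : ∀ x y : V, B x y = B y x) (hpos : ∀ v : V, B e v = 0 → v ≠ 0 → 0 < B v v) :
    ∃ δ > 0, ∀ v ∈ B.causalCone e, δ * ‖v‖ ≤ -B v e := by
  have hK : IsCompact (B.causalCone e ∩ sphere 0 1) :=
    isCompact_of_isClosed_isBounded (isClosed_causalCone.inter isClosed_sphere)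
      (isBounded_sphere.subset inter_subset_right)
  obtain ⟨δ, hδ₀, hδ⟩ := hK.exists_forall_le' (f := fun v => -B v e)
    (B.flip e).continuous_of_finiteDimensional.neg.continuousOn
    fun v hv => neg_pos.2 <| apply_lt_zero_of_mem_causalCone hsymm hpos hv.1
      (ne_zero_of_mem_unit_sphere ⟨v, hv.2⟩)
  refine ⟨δ, hδ₀, fun v hv => ?_⟩
  rcases eq_or_ne v 0 with rfl | hv₀
  · simp
  have hnv : 0 < ‖v‖ := norm_pos_iff.2 hv₀
  have := hδ (‖v‖⁻¹ • v) ⟨smul_mem_causalCone (by positivity) hv, by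
    simp [norm_smul, hnv.ne']⟩
  simp only [map_smul, LinearMap.smul_apply, smul_eq_mul] at this
  calc δ * ‖v‖ ≤ -(‖v‖⁻¹ * B v e) * ‖v‖ := by gcongr
    _ = -B v e := by field_simp

theorem ball_subset_causalCone (hsymm : ∀ x y : V, B x y = B y x) {M δ r : ℝ} (hM₀ : 0 ≤ M)
    (hM : ∀ x y : V, |B x y| ≤ M * ‖x‖ * ‖y‖) (hδ : ∀ v ∈ B.causalCone e, δ * ‖v‖ ≤ -B v e)
    {v : V} (hv : v ∈ B.causalCone e) (hr : r ≤ ‖v‖) (hrB : 3 * M * ‖v‖ * r ≤ -B v v)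
    (hre : M * r * ‖e‖ ≤ δ * ‖v‖) : ball v r ⊆ B.causalCone e := by
  intro w hw
  obtain ⟨d, rfl⟩ : ∃ d, w = v + d := ⟨w - v, by abel⟩
  have hd : ‖d‖ ≤ r := by simpa using (mem_ball.1 hw).le
  refine ⟨(apply_add_self_le B hsymm hM₀ hM (hd.trans hr)).trans ?_, ?_⟩
  · nlinarith [mul_le_mul_of_nonneg_left hd (by positivity : 0 ≤ 3 * M * ‖v‖)]
  · have hde := (le_abs_self _).trans (hM d e)
    have : M * ‖d‖ * ‖e‖ ≤ M * r * ‖e‖ := by gcongr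
    simp only [map_add, LinearMap.add_apply]
    linarith [hδ v hv]

end LinearMap.BilinForm

open LinearMap.BilinForm

theorem stmt_6 (V : Type*) [NormedAddCommGroup V] [NormedSpace ℝ V]
    [FiniteDimensional ℝ V] (B : LinearMap.BilinForm ℝ V)
    (hsymm : ∀ x y : V, B x y = B y x)
    (e : V) (he : B e e < 0)
    (hpos : ∀ v : V, B e v = 0 → v ≠ 0 → 0 < B v v) :
    ∃ C : ℝ, ∀ v ∈ {v : V | B v v ≤ 0 ∧ B v e ≤ 0},
      -B v v ≤ C * ‖v‖ * Metric.infDist v (frontier {v : V | B v v ≤ 0 ∧ B v e ≤ 0}) := by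
  obtain ⟨M, hM₀, hM⟩ := B.exists_pos_bound
  obtain ⟨δ, hδ₀, hδ⟩ := exists_pos_mul_norm_le_neg_apply hsymm hpos
  obtain ⟨C, hCM, hCδ⟩ : ∃ C, 3 * M ≤ C ∧ M ^ 2 * ‖e‖ ≤ C * δ :=
    ⟨3 * M + M ^ 2 * ‖e‖ / δ, le_add_of_nonneg_right (by positivity), by field_simp; nlinarith⟩
  have hC₀ : 0 < C := by linarith
  refine ⟨C, fun v hv => ?_⟩
  rcases le_or_gt (-B v v) 0 with hq | hq
  · exact hq.trans (mul_nonneg (mul_nonneg hC₀.le (norm_nonneg v)) infDist_nonneg)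
  have hv₀ : 0 < ‖v‖ := norm_pos_iff.2 (by rintro rfl; simp at hq)
  obtain ⟨r, hr₀, hCr⟩ : ∃ r, 0 ≤ r ∧ C * ‖v‖ * r = -B v v :=
    ⟨-B v v / (C * ‖v‖), by positivity, by field_simp⟩
  have hrM : C * r ≤ M * ‖v‖ :=
    le_of_mul_le_mul_right (by linarith [(neg_le_abs _).trans (hM v v)]) hv₀
  have hball : ball v r ⊆ B.causalCone e := by
    refine ball_subset_causalCone hsymm hM₀.le hM hδ hv ?_ ?_ ?_
    · exact le_of_mul_le_mul_left (hrM.trans (by gcongr; linarith)) hC₀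
    · rw [← hCr]; gcongr
    · refine le_of_mul_le_mul_left ?_ hC₀
      calc C * (M * r * ‖e‖) = M * ‖e‖ * (C * r) := by ring
        _ ≤ M * ‖e‖ * (M * ‖v‖) := by gcongr
        _ ≤ C * (δ * ‖v‖) := by nlinarith
  calc -B v v = C * ‖v‖ * r := hCr.symm
    _ ≤ C * ‖v‖ * infDist v (frontier (B.causalCone e)) := by
      gcongr
      exact le_infDist_frontier_of_ball_subset (nonempty_frontier_causalCone he) hball
end

section
/- With V, ⟨·,·⟩₁, 𝔗 as above, there exists a constant c > 0 such that c ‖w‖ dist(v, ∂𝔗) ≤ |⟨v,w⟩₁| for all v, w ∈ 𝔗. -/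
/-!
For `w ∈ 𝔗 \ {0}` the hyperplane `w^⊥` misses the interior of `𝔗`: interior points are timelike,
the orthogonal complement of a timelike vector is spacelike, and `w` itself is causal. So every
point of `w^⊥` is at least `dist(v, ∂𝔗)` away from `v`, and since the distance from `v` to the
kernel of the functional `⟨w, ·⟩₁` is `|⟨v, w⟩₁| / ‖⟨w, ·⟩₁‖`, we get
`‖⟨w, ·⟩₁‖ dist(v, ∂𝔗) ≤ |⟨v, w⟩₁|`. Finally `w ↦ ⟨w, ·⟩₁` is an injective linear map on a
finite-dimensional space, hence antilipschitz: `‖⟨w, ·⟩₁‖ ≥ c ‖w‖`.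
-/

open Filter Topology Metric Set

theorem eventually_add_smul_mem_of_mem_interior {E : Type*} [TopologicalSpace E] [AddCommGroup E]
    [Module ℝ E] [ContinuousAdd E] [ContinuousSMul ℝ E] {s : Set E} {v : E}
    (hv : v ∈ interior s) (u : E) : ∀ᶠ t in 𝓝[>] (0 : ℝ), v + t • u ∈ s := by
  have hlim : Tendsto (fun t : ℝ => v + t • u) (𝓝 0) (𝓝 v) := by
    have hcont : Continuous fun t : ℝ => v + t • u := by fun_prop
    simpa using hcont.tendsto 0
  exact nhdsWithin_le_nhds (hlim.eventually (mem_interior_iff_mem_nhds.mp hv))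

theorem infDist_frontier_le_dist_of_notMem_interior {E : Type*} [NormedAddCommGroup E]
    [NormedSpace ℝ E] [FiniteDimensional ℝ E] {s : Set E} {v p : E} (hv : v ∈ closure s)
    (hp : p ∉ interior s) : infDist v (frontier s) ≤ dist v p := by
  by_cases hvi : v ∈ interior s
  · obtain ⟨y, hy, hdist⟩ := exists_mem_frontier_infDist_compl_eq_dist hvi
      fun h => hp (h ▸ mem_univ p)
    calc infDist v (frontier s) ≤ dist v y := infDist_le_dist_of_mem (frontier_interior_subset hy)
      _ = infDist v (interior s)ᶜ := hdist.symm
      _ ≤ dist v p := infDist_le_dist_of_mem hp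
  · rw [infDist_zero_of_mem (show v ∈ frontier s from ⟨hv, hvi⟩)]
    exact dist_nonneg

theorem ContinuousLinearMap.opNorm_mul_le_of_le_dist_ker {E : Type*} [SeminormedAddCommGroup E]
    [NormedSpace ℝ E] (f : E →L[ℝ] ℝ) {v : E} {d : ℝ} (hd : 0 ≤ d)
    (h : ∀ p, f p = 0 → d ≤ dist v p) : ‖f‖ * d ≤ |f v| := by
  rw [mul_comm, ← abs_of_nonneg hd, ← Real.norm_eq_abs, ← norm_smul]
  refine opNorm_le_bound _ (abs_nonneg _) fun y => ?_
  rw [smul_apply, smul_eq_mul, norm_mul, Real.norm_eq_abs, Real.norm_eq_abs, abs_of_nonneg hd]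
  rcases eq_or_ne (f y) 0 with hy | hy
  · rw [hy, abs_zero, mul_zero]
    positivity
  · have hker : f (v - (f v / f y) • y) = 0 := by
      rw [map_sub, map_smul, smul_eq_mul, div_mul_cancel₀ _ hy, sub_self]
    calc d * |f y| ≤ dist v (v - (f v / f y) • y) * |f y| := by gcongr; exact h _ hker
      _ = |f v| * ‖y‖ := by
        rw [dist_self_sub_right, norm_smul, Real.norm_eq_abs, abs_div]
        field_simp

namespace LinearMap.BilinForm

variable {V : Type*} [AddCommGroup V] [Module ℝ V] {B : LinearMap.BilinForm ℝ V} {e : V}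

/-- The future causal cone `𝔗`, time-oriented by the timelike vector `e`. -/
def futureCausalCone (B : LinearMap.BilinForm ℝ V) (e : V) : Set V := {v | B v v ≤ 0 ∧ B v e ≤ 0}

theorem eq_zero_of_orthogonal_of_nonpos (hpos : ∀ v : V, B e v = 0 → v ≠ 0 → 0 < B v v) {v : V}
    (hev : B e v = 0) (hvv : B v v ≤ 0) : v = 0 := by
  by_contra hv
  exact (hpos v hev hv).not_ge hvv

theorem separatingLeft_of_pos_on_orthogonal (hsymm : ∀ x y : V, B x y = B y x)
    (hpos : ∀ v : V, B e v = 0 → v ≠ 0 → 0 < B v v) : B.SeparatingLeft := fun v hv =>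
  eq_zero_of_orthogonal_of_nonpos hpos (hsymm e v ▸ hv e) (hv v).le

theorem pos_of_orthogonal_of_neg (hsymm : ∀ x y : V, B x y = B y x)
    (hpos : ∀ v : V, B e v = 0 → v ≠ 0 → 0 < B v v) {p x : V} (hp : B p p < 0)
    (hpx : B p x = 0) (hx : x ≠ 0) : 0 < B x x := by
  by_contra! hxx
  set a := B e x
  set b := B e p
  have hb : b ≠ 0 := fun hb => hp.ne <| by
    rw [eq_zero_of_orthogonal_of_nonpos hpos hb hp.le]
    simp
  -- `z` is the point of `span {p, x}` on `e^⊥`; that plane is negative semidefinite.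
  set z := a • p - b • x
  have hxp : B x p = 0 := hsymm x p ▸ hpx
  have hz : z = 0 := by
    refine eq_zero_of_orthogonal_of_nonpos hpos ?_ ?_
    · simp only [z, map_sub, map_smul, smul_eq_mul]
      ring
    · have : B z z = a ^ 2 * B p p + b ^ 2 * B x x := by
        simp only [z, map_sub, map_smul, LinearMap.sub_apply, LinearMap.smul_apply, smul_eq_mul,
          hpx, hxp]
        ring
      rw [this]
      nlinarith [sq_nonneg a, sq_nonneg b]
  have ha : a = 0 := by
    have := congrArg (B p) hz
    simp only [z, map_sub, map_smul, smul_eq_mul, hpx, map_zero] at this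
    simpa [hp.ne] using this
  simp only [z, ha, zero_smul, zero_sub, neg_eq_zero, smul_eq_zero, hb, false_or] at hz
  exact hx hz

theorem neg_of_mem_interior_futureCausalCone (hsymm : ∀ x y : V, B x y = B y x) (he : B e e < 0)
    (hpos : ∀ v : V, B e v = 0 → v ≠ 0 → 0 < B v v) [TopologicalSpace V] [ContinuousAdd V]
    [ContinuousSMul ℝ V] {v : V} (hv : v ∈ interior (futureCausalCone B e)) : B v v < 0 := by
  refine (interior_subset hv).1.lt_of_ne fun hvv => ?_
  rcases eq_or_ne v 0 with rfl | hv0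
  · obtain ⟨t, htS, ht⟩ :=
      ((eventually_add_smul_mem_of_mem_interior hv (-e)).and eventually_mem_nhdsWithin).exists
    have : B (0 + t • -e) e ≤ 0 := htS.2
    simp only [zero_add, map_smul, map_neg, LinearMap.smul_apply, LinearMap.neg_apply, smul_eq_mul]
      at this
    nlinarith [mem_Ioi.1 ht]
  · obtain ⟨u, hu⟩ : ∃ u, 0 < B v u := by
      obtain ⟨u, hu⟩ : ∃ u, B v u ≠ 0 := by
        by_contra! h
        exact hv0 (separatingLeft_of_pos_on_orthogonal hsymm hpos v h)
      rcases hu.lt_or_gt with hu | hu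
      · exact ⟨-u, by simpa using hu⟩
      · exact ⟨u, hu⟩
    have hlim : Tendsto (fun t : ℝ => 2 * B v u + t * B u u) (𝓝[>] 0) (𝓝 (2 * B v u)) := by
      refine Tendsto.mono_left ?_ nhdsWithin_le_nhds
      have hcont : Continuous fun t : ℝ => 2 * B v u + t * B u u := by fun_prop
      simpa using hcont.tendsto 0
    -- the derivative of `t ↦ B (v + t u) (v + t u)` at `0` is `2 B v u > 0`
    have h2u : (0 : ℝ) < 2 * B v u := by linarith
    obtain ⟨t, htS, ht, hq⟩ := ((eventually_add_smul_mem_of_mem_interior hv u).and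
      (eventually_mem_nhdsWithin.and (hlim.eventually (lt_mem_nhds h2u)))).exists
    have hexp : B (v + t • u) (v + t • u) = t * (2 * B v u + t * B u u) := by
      simp only [map_add, map_smul, LinearMap.add_apply, LinearMap.smul_apply, smul_eq_mul, hvv,
        hsymm u v]
      ring
    have := htS.1
    rw [hexp] at this
    nlinarith [mul_pos (mem_Ioi.1 ht) hq]

theorem notMem_interior_futureCausalCone_of_orthogonal (hsymm : ∀ x y : V, B x y = B y x)
    (he : B e e < 0) (hpos : ∀ v : V, B e v = 0 → v ≠ 0 → 0 < B v v) [TopologicalSpace V]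
    [ContinuousAdd V] [ContinuousSMul ℝ V] {w p : V} (hw : w ∈ futureCausalCone B e)
    (hw0 : w ≠ 0) (hwp : B w p = 0) : p ∉ interior (futureCausalCone B e) := fun hp =>
  (pos_of_orthogonal_of_neg hsymm hpos (neg_of_mem_interior_futureCausalCone hsymm he hpos hp)
    (hsymm p w ▸ hwp) hw0).not_ge hw.1

theorem exists_pos_norm_le_mul_norm_toContinuousLinearMap {V : Type*} [NormedAddCommGroup V]
    [NormedSpace ℝ V] [FiniteDimensional ℝ V] {B : LinearMap.BilinForm ℝ V}
    (hB : B.SeparatingLeft) :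
    ∃ K > (0 : ℝ), ∀ w, ‖w‖ ≤ K * ‖LinearMap.toContinuousLinearMap (B w)‖ := by
  set L : V →ₗ[ℝ] V →L[ℝ] ℝ := LinearMap.toContinuousLinearMap.toLinearMap ∘ₗ B
  have hL : LinearMap.ker L = ⊥ := LinearMap.ker_eq_bot'.2 fun w hw =>
    hB w fun y => by simpa [L] using congrArg (· y) hw
  obtain ⟨K, hK, hKL⟩ := L.exists_antilipschitzWith hL
  refine ⟨K, hK, fun w => ?_⟩
  simpa [L] using hKL.le_mul_dist w 0

end LinearMap.BilinForm

open LinearMap.BilinForm in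
theorem stmt_7 (V : Type*) [NormedAddCommGroup V] [NormedSpace ℝ V]
    [FiniteDimensional ℝ V] (B : LinearMap.BilinForm ℝ V)
    (hsymm : ∀ x y : V, B x y = B y x)
    (e : V) (he : B e e < 0)
    (hpos : ∀ v : V, B e v = 0 → v ≠ 0 → 0 < B v v) :
    ∃ c > (0:ℝ), ∀ v ∈ {v : V | B v v ≤ 0 ∧ B v e ≤ 0},
      ∀ w ∈ {v : V | B v v ≤ 0 ∧ B v e ≤ 0},
      c * ‖w‖ * Metric.infDist v (frontier {v : V | B v v ≤ 0 ∧ B v e ≤ 0})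
        ≤ |B v w| := by
  obtain ⟨K, hK, hKw⟩ := exists_pos_norm_le_mul_norm_toContinuousLinearMap
    (separatingLeft_of_pos_on_orthogonal hsymm hpos)
  refine ⟨K⁻¹, inv_pos.2 hK, fun v hv w hw => ?_⟩
  rcases eq_or_ne w 0 with rfl | hw0
  · simp
  set f := LinearMap.toContinuousLinearMap (B w)
  set d := infDist v (frontier (futureCausalCone B e))
  have hker (p : V) (hp : f p = 0) : d ≤ dist v p :=
    infDist_frontier_le_dist_of_notMem_interior (subset_closure hv)
      (notMem_interior_futureCausalCone_of_orthogonal hsymm he hpos hw hw0 hp)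
  calc K⁻¹ * ‖w‖ * d ≤ ‖f‖ * d := by
        refine mul_le_mul_of_nonneg_right ?_ infDist_nonneg
        rw [inv_mul_le_iff₀ hK]
        exact hKw w
    _ ≤ |B w v| := f.opNorm_mul_le_of_le_dist_ker infDist_nonneg hker
    _ = |B v w| := by rw [hsymm]
end

section
/- Let c, C, η be the constants from the inequalities c‖w‖dist(v,∂𝔗) ≤ |⟨v,w⟩₁|, |v|₁² ≤ C‖v‖dist(v,∂𝔗), and ‖v+w‖ ≥ η(‖v‖+‖w‖) on the cone 𝔗. For λ₁ < ∞ set μ := cη/(4λ₁²C). Then |v+w|₁ ≥ λ₁(|v|₁ + |w|₁) for all v, w ∈ 𝔗 with ‖v‖ ≤ μ‖w‖ and dist(w, ∂𝔗) ≤ μ·dist(v, ∂𝔗). -/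
/-!
Put `μ = cη/(4λ²C)`. The quadratic form of `v + w` is large: by the first inequality, the
norm bound and superadditivity of the distance to the boundary,
`|v + w|₁² ≥ c‖v + w‖ dist(v + w, ∂𝔗) ≥ cη‖w‖ dist(v, ∂𝔗)`.
Both `|v|₁²` and `|w|₁²` are small: by the second inequality and the two smallness hypotheses
each is at most `Cμ‖w‖ dist(v, ∂𝔗)`, so `2λ²(|v|₁² + |w|₁²) ≤ cη‖w‖ dist(v, ∂𝔗)`.
Since `(√a + √b)² ≤ 2(a + b)`, this gives `λ(|v|₁ + |w|₁) ≤ |v + w|₁`.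
-/

open Metric

lemma Real.sqrt_add_sqrt_sq_le {a b : ℝ} (ha : 0 ≤ a) (hb : 0 ≤ b) :
    (√a + √b) ^ 2 ≤ 2 * (a + b) := by
  simpa only [Real.sq_sqrt ha, Real.sq_sqrt hb] using add_sq_le (a := √a) (b := √b)

lemma Real.mul_sqrt_add_sqrt_le_sqrt {a b x lam : ℝ} (ha : 0 ≤ a) (hb : 0 ≤ b)
    (h : 2 * lam ^ 2 * (a + b) ≤ x) : lam * (√a + √b) ≤ √x :=
  Real.le_sqrt_of_sq_le <| calc
    (lam * (√a + √b)) ^ 2 = lam ^ 2 * (√a + √b) ^ 2 := mul_pow _ _ _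
    _ ≤ lam ^ 2 * (2 * (a + b)) := by gcongr; exact Real.sqrt_add_sqrt_sq_le ha hb
    _ = 2 * lam ^ 2 * (a + b) := by ring
    _ ≤ x := h

lemma mul_mul_div_self_le {x y : ℝ} (hx : 0 ≤ x) (hy : 0 ≤ y) : x * (y / x) ≤ y := by
  rcases hx.eq_or_lt with rfl | hx
  · simpa using hy
  · rw [mul_div_cancel₀ _ hx.ne']

section LorentzianCone

variable {V : Type*} [NormedAddCommGroup V] [NormedSpace ℝ V] {B : LinearMap.BilinForm ℝ V}
  {T : Set V} {c C η lam : ℝ} {v w : V}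

lemma mul_norm_mul_infDist_le_abs_apply_add (hadd : ∀ v ∈ T, ∀ w ∈ T, v + w ∈ T)
    (hc : 0 ≤ c) (hη : 0 ≤ η)
    (h1 : ∀ v ∈ T, ∀ w ∈ T, c * ‖w‖ * infDist v (frontier T) ≤ |B v w|)
    (h3 : ∀ v ∈ T, ∀ w ∈ T, η * (‖v‖ + ‖w‖) ≤ ‖v + w‖)
    (h4 : ∀ v ∈ T, ∀ w ∈ T,
      infDist v (frontier T) + infDist w (frontier T) ≤ infDist (v + w) (frontier T))
    (hv : v ∈ T) (hw : w ∈ T) :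
    c * η * ‖w‖ * infDist v (frontier T) ≤ |B (v + w) (v + w)| := by
  have hnorm : η * ‖w‖ ≤ ‖v + w‖ := by
    linarith [h3 v hv w hw, mul_nonneg hη (norm_nonneg v)]
  have hdist : infDist v (frontier T) ≤ infDist (v + w) (frontier T) := by
    linarith [h4 v hv w hw, infDist_nonneg (x := w) (s := frontier T)]
  calc c * η * ‖w‖ * infDist v (frontier T)
      = c * (η * ‖w‖) * infDist v (frontier T) := by ring
    _ ≤ c * ‖v + w‖ * infDist (v + w) (frontier T) := by gcongr; exact infDist_nonneg
    _ ≤ |B (v + w) (v + w)| := h1 _ (hadd v hv w hw) _ (hadd v hv w hw)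

lemma two_mul_sq_mul_add_abs_le (hC : 0 ≤ C) (hcη : 0 ≤ c * η)
    (h2 : ∀ v ∈ T, |B v v| ≤ C * ‖v‖ * infDist v (frontier T))
    (hv : v ∈ T) (hw : w ∈ T)
    (hvw : ‖v‖ ≤ (c * η / (4 * lam ^ 2 * C)) * ‖w‖)
    (hdist : infDist w (frontier T)
      ≤ (c * η / (4 * lam ^ 2 * C)) * infDist v (frontier T)) :
    2 * lam ^ 2 * (|B v v| + |B w w|) ≤ c * η * ‖w‖ * infDist v (frontier T) := by
  set μ := c * η / (4 * lam ^ 2 * C)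
  set dv := infDist v (frontier T)
  have hdv : 0 ≤ dv := infDist_nonneg
  have hsum : |B v v| + |B w w| ≤ 2 * C * μ * ‖w‖ * dv := by
    have hv' : C * ‖v‖ * dv ≤ C * (μ * ‖w‖) * dv := by gcongr
    have hw' : C * ‖w‖ * infDist w (frontier T) ≤ C * ‖w‖ * (μ * dv) := by gcongr
    linarith [h2 v hv, h2 w hw]
  have hμ : 4 * lam ^ 2 * C * μ ≤ c * η := mul_mul_div_self_le (by positivity) hcη
  calc 2 * lam ^ 2 * (|B v v| + |B w w|)
      ≤ 2 * lam ^ 2 * (2 * C * μ * ‖w‖ * dv) := by gcongr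
    _ = 4 * lam ^ 2 * C * μ * (‖w‖ * dv) := by ring
    _ ≤ c * η * (‖w‖ * dv) := by gcongr
    _ = c * η * ‖w‖ * dv := by ring

end LorentzianCone

theorem stmt_8_general (V : Type*) [NormedAddCommGroup V] [NormedSpace ℝ V]
    (B : LinearMap.BilinForm ℝ V) (T : Set V)
    (hadd : ∀ v ∈ T, ∀ w ∈ T, v + w ∈ T)
    (c C η : ℝ) (hc : 0 < c) (hC : 0 < C) (hη : 0 < η)
    (h1 : ∀ v ∈ T, ∀ w ∈ T,
      c * ‖w‖ * Metric.infDist v (frontier T) ≤ |B v w|)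
    (h2 : ∀ v ∈ T, |B v v| ≤ C * ‖v‖ * Metric.infDist v (frontier T))
    (h3 : ∀ v ∈ T, ∀ w ∈ T, η * (‖v‖ + ‖w‖) ≤ ‖v + w‖)
    (h4 : ∀ v ∈ T, ∀ w ∈ T,
      Metric.infDist v (frontier T) + Metric.infDist w (frontier T)
        ≤ Metric.infDist (v + w) (frontier T))
    (lam : ℝ)
    (v : V) (hv : v ∈ T) (w : V) (hw : w ∈ T)
    (hvw : ‖v‖ ≤ (c * η / (4 * lam ^ 2 * C)) * ‖w‖)
    (hdist : Metric.infDist w (frontier T)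
      ≤ (c * η / (4 * lam ^ 2 * C)) * Metric.infDist v (frontier T)) :
    lam * (Real.sqrt |B v v| + Real.sqrt |B w w|) ≤ Real.sqrt |B (v + w) (v + w)| :=
  Real.mul_sqrt_add_sqrt_le_sqrt (abs_nonneg _) (abs_nonneg _) <|
    (two_mul_sq_mul_add_abs_le hC.le (by positivity) h2 hv hw hvw hdist).trans
      (mul_norm_mul_infDist_le_abs_apply_add hadd hc.le hη.le h1 h3 h4 hv hw)

theorem stmt_8 (V : Type*) [NormedAddCommGroup V] [NormedSpace ℝ V]
    [FiniteDimensional ℝ V] (B : LinearMap.BilinForm ℝ V) (T : Set V)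
    (hadd : ∀ v ∈ T, ∀ w ∈ T, v + w ∈ T)
    (c C η : ℝ) (hc : 0 < c) (hC : 0 < C) (hη : 0 < η)
    (h1 : ∀ v ∈ T, ∀ w ∈ T,
      c * ‖w‖ * Metric.infDist v (frontier T) ≤ |B v w|)
    (h2 : ∀ v ∈ T, |B v v| ≤ C * ‖v‖ * Metric.infDist v (frontier T))
    (h3 : ∀ v ∈ T, ∀ w ∈ T, η * (‖v‖ + ‖w‖) ≤ ‖v + w‖)
    (h4 : ∀ v ∈ T, ∀ w ∈ T,
      Metric.infDist v (frontier T) + Metric.infDist w (frontier T)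
        ≤ Metric.infDist (v + w) (frontier T))
    (lam : ℝ) (hlam : 0 < lam)
    (v : V) (hv : v ∈ T) (w : V) (hw : w ∈ T)
    (hvw : ‖v‖ ≤ (c * η / (4 * lam ^ 2 * C)) * ‖w‖)
    (hdist : Metric.infDist w (frontier T)
      ≤ (c * η / (4 * lam ^ 2 * C)) * Metric.infDist v (frontier T)) :
    lam * (Real.sqrt |B v v| + Real.sqrt |B w w|) ≤ Real.sqrt |B (v + w) (v + w)| :=
  stmt_8_general V B T hadd c C η hc hC hη h1 h2 h3 h4 lam v hv w hw hvw hdist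
end

section
/- Let K < ∞, L < ∞ and let f : [0,∞) → [0,∞) be L-Lipschitz with f(2t) − 2f(t) ≤ K and z·f(t) − f(zt) ≤ K for z ∈ {2,3} and all t ≥ 0. Then there exists a ∈ ℝ such that |f(t) − a·t| ≤ 2K for all t ≥ 0. -/
/-!
The doubling hypotheses make `f (2ⁿ t) / 2ⁿ` a Cauchy sequence, so it converges to a function
`g` with `g (2t) = 2 g t`, `3 g t ≤ g (3t)` and `|f - g| ≤ K`; `g` inherits the Lipschitz bound
and is continuous. In logarithmic coordinates `φ x = g (eˣ) / eˣ` is continuous, `log 2`-periodic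
and nondecreasing under the shift by `log 3`; integrating over a period shows that this shift
changes nothing, so `φ` is also `log 3`-periodic. As `log 2 / log 3` is irrational, the periods
are dense and `φ` is constant, i.e. `g` is linear.
-/

open Filter Topology Real Set

noncomputable def doublingLimit (f : ℝ → ℝ) (t : ℝ) : ℝ :=
  limUnder atTop fun n : ℕ => f (2 ^ n * t) / 2 ^ n

section DoublingLimit

variable {f : ℝ → ℝ} {K : ℝ} (hf : ∀ t, 0 ≤ t → |f (2 * t) - 2 * f t| ≤ K)
include hf

theorem dist_div_two_pow_succ_le {t : ℝ} (ht : 0 ≤ t) (n : ℕ) :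
    dist (f (2 ^ n * t) / 2 ^ n) (f (2 ^ (n + 1) * t) / 2 ^ (n + 1)) ≤ K / 2 / 2 ^ n := by
  have key : f (2 ^ n * t) / 2 ^ n - f (2 ^ (n + 1) * t) / 2 ^ (n + 1)
      = -(f (2 * (2 ^ n * t)) - 2 * f (2 ^ n * t)) / 2 ^ (n + 1) := by
    rw [pow_succ', mul_assoc]
    field_simp
    ring
  rw [dist_eq, key, abs_div, abs_neg, abs_of_pos (by positivity : (0 : ℝ) < 2 ^ (n + 1))]
  calc _ ≤ K / 2 ^ (n + 1) :=
        div_le_div_of_nonneg_right (hf _ (mul_nonneg (by positivity) ht)) (by positivity)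
    _ = K / 2 / 2 ^ n := by rw [pow_succ', div_div]

theorem tendsto_doublingLimit {t : ℝ} (ht : 0 ≤ t) :
    Tendsto (fun n : ℕ => f (2 ^ n * t) / 2 ^ n) atTop (𝓝 (doublingLimit f t)) :=
  tendsto_nhds_limUnder <| cauchySeq_tendsto_of_complete <|
    cauchySeq_of_le_geometric_two (dist_div_two_pow_succ_le hf ht)

theorem abs_sub_doublingLimit_le {t : ℝ} (ht : 0 ≤ t) : |f t - doublingLimit f t| ≤ K := by
  simpa [dist_eq] using
    dist_le_of_le_geometric_two_of_tendsto₀ (dist_div_two_pow_succ_le hf ht)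
      (tendsto_doublingLimit hf ht)

theorem doublingLimit_two_mul {t : ℝ} (ht : 0 ≤ t) :
    doublingLimit f (2 * t) = 2 * doublingLimit f t := by
  refine tendsto_nhds_unique (tendsto_doublingLimit hf (mul_nonneg zero_le_two ht)) ?_
  refine (((tendsto_doublingLimit hf ht).comp (tendsto_add_atTop_nat 1)).const_mul 2).congr
    fun n => ?_
  simp only [Function.comp_apply, pow_succ]
  field_simp

theorem mul_doublingLimit_le {c M : ℝ} (hc : 0 ≤ c)
    (hfc : ∀ t, 0 ≤ t → c * f t - f (c * t) ≤ M) {t : ℝ} (ht : 0 ≤ t) : c * doublingLimit f t ≤ doublingLimit f (c * t) := by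
  have hlim := ((tendsto_doublingLimit hf ht).const_mul c).sub
    (tendsto_doublingLimit hf (mul_nonneg hc ht))
  have hbound : Tendsto (fun n : ℕ => M / 2 ^ n) atTop (𝓝 0) :=
    tendsto_const_nhds.div_atTop (tendsto_pow_atTop_atTop_of_one_lt one_lt_two)
  refine sub_nonpos.1 (le_of_tendsto_of_tendsto' hlim hbound fun n => ?_)
  rw [mul_left_comm, ← mul_div_assoc, ← sub_div]
  exact div_le_div_of_nonneg_right (hfc _ (mul_nonneg (by positivity) ht)) (by positivity)

theorem abs_doublingLimit_sub_le {L : ℝ}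
    (hlip : ∀ s t, 0 ≤ s → 0 ≤ t → |f s - f t| ≤ L * |s - t|) {s t : ℝ} (hs : 0 ≤ s)
    (ht : 0 ≤ t) : |doublingLimit f s - doublingLimit f t| ≤ L * |s - t| := by
  refine le_of_tendsto' ((tendsto_doublingLimit hf hs).sub (tendsto_doublingLimit hf ht)).abs
    fun n => ?_
  have h2n : (0 : ℝ) < 2 ^ n := by positivity
  rw [← sub_div, abs_div, abs_of_pos h2n, div_le_iff₀ h2n]
  calc _ ≤ L * |2 ^ n * s - 2 ^ n * t| :=
        hlip _ _ (mul_nonneg h2n.le hs) (mul_nonneg h2n.le ht)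
    _ = L * |s - t| * 2 ^ n := by rw [← mul_sub, abs_mul, abs_of_pos h2n]; ring

theorem continuousOn_doublingLimit {L : ℝ}
    (hlip : ∀ s t, 0 ≤ s → 0 ≤ t → |f s - f t| ≤ L * |s - t|) :
    ContinuousOn (doublingLimit f) (Ici 0) := by
  refine (LipschitzOnWith.of_dist_le_mul (K := L.toNNReal) fun s hs t ht => ?_).continuousOn
  rw [dist_eq, dist_eq]
  exact (abs_doublingLimit_sub_le hf hlip hs ht).trans
    (mul_le_mul_of_nonneg_right (le_coe_toNNReal L) (abs_nonneg _))

end DoublingLimit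

theorem Function.Periodic.periodic_of_le_add {φ : ℝ → ℝ} {p q : ℝ} (hφ : Continuous φ)
    (hp : Function.Periodic φ p) (hp0 : 0 < p) (hle : ∀ x, φ x ≤ φ (x + q)) :
    Function.Periodic φ q := by
  have hφq : Continuous fun y => φ (y + q) := by fun_prop
  have hint : ∀ x, ∫ y in x..x + p, (φ (y + q) - φ y) = 0 := by
    intro x
    rw [intervalIntegral.integral_sub (hφq.intervalIntegrable _ _) (hφ.intervalIntegrable _ _),
      intervalIntegral.integral_comp_add_right φ q, add_right_comm,
      hp.intervalIntegral_add_eq (x + q) x, sub_self]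
  intro x
  by_contra hne
  have hpos : 0 < ∫ y in x..x + p, (φ (y + q) - φ y) :=
    intervalIntegral.integral_pos (by linarith) (hφq.sub hφ).continuousOn
      (fun y _ => sub_nonneg.2 (hle y))
      ⟨x, left_mem_Icc.2 (by linarith), sub_pos.2 ((hle x).lt_of_ne' hne)⟩
  exact hpos.ne' (hint x)

theorem Function.Periodic.eq_of_irrational_div {φ : ℝ → ℝ} {p q : ℝ} (hφ : Continuous φ)
    (hp : Function.Periodic φ p) (hq : Function.Periodic φ q) (hpq : Irrational (p / q))
    (x : ℝ) : φ x = φ 0 := by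
  have hperiods : ∀ s ∈ AddSubgroup.closure {p, q}, Function.Periodic φ s := by
    intro s hs
    induction hs using AddSubgroup.closure_induction with
    | mem s hs =>
      rcases hs with rfl | rfl
      exacts [hp, hq]
    | zero => exact fun y => by rw [add_zero]
    | add s r _ _ hs hr => exact hs.add_period hr
    | neg s _ hs => exact hs.neg
  have hconst : φ = fun _ => φ 0 :=
    Continuous.ext_on (dense_addSubgroupClosure_pair_iff.2 hpq) hφ continuous_const
      fun s hs => by simpa using hperiods s hs 0
  exact congrFun hconst x

theorem irrational_log_two_div_log_three : Irrational (log 2 / log 3) := by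
  rintro ⟨r, hr⟩
  have hr0 : 0 < r := by
    have : 0 < log 2 / log 3 := div_pos (log_pos one_lt_two) (log_pos (by norm_num))
    exact_mod_cast hr ▸ this
  obtain ⟨m, hm⟩ := Int.eq_ofNat_of_zero_le (Rat.num_pos.2 hr0).le
  have hlog : log ((2 : ℝ) ^ r.den) = log ((3 : ℝ) ^ m) := by
    have hr' : (r.den : ℝ) * log 2 = m * log 3 := by
      have h := hr.symm.trans (Rat.cast_def r)
      rw [hm, Int.cast_natCast, div_eq_div_iff (log_pos (by norm_num)).ne'
        (Nat.cast_ne_zero.2 r.den_ne_zero)] at h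
      linarith
    rw [log_pow, log_pow, hr']
  have hpow : (2 : ℕ) ^ r.den = 3 ^ m := by
    exact_mod_cast log_injOn_pos (mem_Ioi.2 (by positivity)) (mem_Ioi.2 (by positivity)) hlog
  have heven : Even (3 ^ m) := hpow ▸ Nat.even_pow.2 ⟨even_two, r.den_ne_zero⟩
  exact Nat.not_even_iff_odd.2 (Odd.pow (by decide)) heven

theorem exists_eq_mul_of_two_mul_eq_of_three_mul_le {g : ℝ → ℝ} (hg : ContinuousOn g (Ioi 0))
    (h2 : ∀ t, 0 ≤ t → g (2 * t) = 2 * g t) (h3 : ∀ t, 0 < t → 3 * g t ≤ g (3 * t)) :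
    ∃ a, ∀ t, 0 ≤ t → g t = a * t := by
  set φ := fun x => g (exp x) / exp x
  have hφ : Continuous φ :=
    (hg.comp_continuous continuous_exp exp_pos).div continuous_exp fun x => (exp_pos x).ne'
  have hexp_add_log {x c : ℝ} (hc : 0 < c) : exp (x + log c) = c * exp x := by
    rw [exp_add, exp_log hc, mul_comm]
  have hp : Function.Periodic φ (log 2) := fun x => by
    simp only [φ, hexp_add_log two_pos, h2 _ (exp_pos x).le]
    exact mul_div_mul_left _ _ two_ne_zero
  have hle : ∀ x, φ x ≤ φ (x + log 3) := fun x => by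
    simp only [φ, hexp_add_log three_pos]
    rw [div_le_div_iff₀ (exp_pos x) (by positivity)]
    nlinarith [exp_pos x, h3 _ (exp_pos x)]
  have hq := hp.periodic_of_le_add hφ (log_pos one_lt_two) hle
  refine ⟨φ 0, fun t ht => ?_⟩
  rcases ht.eq_or_lt with rfl | ht
  · have h20 := h2 0 le_rfl
    rw [mul_zero] at h20
    linarith
  · rw [← hp.eq_of_irrational_div hφ hq irrational_log_two_div_log_three (log t)]
    simp only [φ, exp_log ht]
    rw [div_mul_cancel₀ _ ht.ne']

theorem stmt_10_general (K L : ℝ) (f : ℝ → ℝ)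
    (hlip : ∀ s t : ℝ, 0 ≤ s → 0 ≤ t → |f s - f t| ≤ L * |s - t|)
    (h1 : ∀ t : ℝ, 0 ≤ t → f (2 * t) - 2 * f t ≤ K)
    (h2 : ∀ t : ℝ, 0 ≤ t → 2 * f t - f (2 * t) ≤ K)
    (h3 : ∀ t : ℝ, 0 ≤ t → 3 * f t - f (3 * t) ≤ K) :
    ∃ a : ℝ, ∀ t : ℝ, 0 ≤ t → |f t - a * t| ≤ 2 * K := by
  have hf : ∀ t, 0 ≤ t → |f (2 * t) - 2 * f t| ≤ K := fun t ht =>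
    abs_le.2 ⟨by linarith [h2 t ht], h1 t ht⟩
  obtain ⟨a, ha⟩ := exists_eq_mul_of_two_mul_eq_of_three_mul_le
    ((continuousOn_doublingLimit hf hlip).mono Ioi_subset_Ici_self)
    (fun t ht => doublingLimit_two_mul hf ht)
    (fun t ht => mul_doublingLimit_le hf zero_le_three h3 ht.le)
  refine ⟨a, fun t ht => ?_⟩
  have hK : |f t - a * t| ≤ K := ha t ht ▸ abs_sub_doublingLimit_le hf ht
  linarith [(abs_nonneg _).trans hK]

theorem stmt_10 (K L : ℝ) (f : ℝ → ℝ)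
    (hnonneg : ∀ t : ℝ, 0 ≤ t → 0 ≤ f t)
    (hlip : ∀ s t : ℝ, 0 ≤ s → 0 ≤ t → |f s - f t| ≤ L * |s - t|)
    (h1 : ∀ t : ℝ, 0 ≤ t → f (2 * t) - 2 * f t ≤ K)
    (h2 : ∀ t : ℝ, 0 ≤ t → 2 * f t - f (2 * t) ≤ K)
    (h3 : ∀ t : ℝ, 0 ≤ t → 3 * f t - f (3 * t) ≤ K) :
    ∃ a : ℝ, ∀ t : ℝ, 0 ≤ t → |f t - a * t| ≤ 2 * K :=
  stmt_10_general K L f hlip h1 h2 h3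
end

section
/- Let Γ ⊂ V be a cocompact lattice in a finite-dimensional normed space V and let 𝔗 ⊂ V be a closed convex cone with nonempty interior. Then there exists fil < ∞ such that for all x, y ∈ V there is k ∈ Γ with ‖x − (y + k)‖ ≤ fil and y + k ∈ x + 𝔗. -/
open Metric Pointwise

theorem exists_closedBall_subset_of_smul_mem {V : Type*} [NormedAddCommGroup V]
    [NormedSpace ℝ V] {T : Set V} (hcone : ∀ c : ℝ, 0 < c → ∀ v ∈ T, c • v ∈ T)
    (hint : (interior T).Nonempty)
    (R : ℝ) : ∃ u : V, closedBall u R ⊆ T := by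
  obtain ⟨v, hv⟩ := hint
  obtain ⟨ε, hε, hball⟩ := Metric.isOpen_iff.mp isOpen_interior v hv
  set c : ℝ := (|R| + 1) / ε
  have hc : 0 < c := by positivity
  have hR : R < ‖c‖ * ε := by
    rw [Real.norm_of_nonneg hc.le, div_mul_cancel₀ _ hε.ne']
    linarith [le_abs_self R]
  refine ⟨c • v, ?_⟩
  calc closedBall (c • v) R ⊆ ball (c • v) (‖c‖ * ε) := closedBall_subset_ball hR
    _ = c • ball v ε := (smul_ball hc.ne' v ε).symm
    _ ⊆ c • T := Set.smul_set_mono (hball.trans interior_subset)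
    _ ⊆ T := by
      rintro _ ⟨w, hw, rfl⟩
      exact hcone c hc w hw

theorem stmt_13_general (V : Type*) [NormedAddCommGroup V] [NormedSpace ℝ V]
    (Γ : AddSubgroup V)
    (hcocompact : ∃ D : ℝ, ∀ x y : V, ∃ k ∈ Γ, ‖x - (y + k)‖ ≤ D)
    (T : Set V)
    (hcone : ∀ (c : ℝ), 0 ≤ c → ∀ v ∈ T, c • v ∈ T)
    (hint : (interior T).Nonempty) :
    ∃ fil : ℝ, ∀ x y : V, ∃ k ∈ Γ, ‖x - (y + k)‖ ≤ fil ∧ (y + k) - x ∈ T := by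
  obtain ⟨D, hD⟩ := hcocompact
  obtain ⟨u, hu⟩ := exists_closedBall_subset_of_smul_mem (fun c hc => hcone c hc.le) hint D
  refine ⟨‖u‖ + D, fun x y => ?_⟩
  -- translate `y` by the lattice towards `x + u`, the centre of a ball of radius `D` inside `x + T`
  obtain ⟨k, hk, hle⟩ := hD (x + u) y
  refine ⟨k, hk, ?_, hu ?_⟩
  · calc ‖x - (y + k)‖ = ‖(x + u - (y + k)) - u‖ := by congr 1; abel
      _ ≤ ‖x + u - (y + k)‖ + ‖u‖ := norm_sub_le _ _
      _ ≤ ‖u‖ + D := by linarith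
  · rwa [mem_closedBall, dist_eq_norm, ← norm_neg,
      show -(y + k - x - u) = x + u - (y + k) by abel]

theorem stmt_13 (V : Type*) [NormedAddCommGroup V] [NormedSpace ℝ V]
    [FiniteDimensional ℝ V] (Γ : AddSubgroup V)
    (hcocompact : ∃ D : ℝ, ∀ x y : V, ∃ k ∈ Γ, ‖x - (y + k)‖ ≤ D)
    (T : Set V) (hclosed : IsClosed T) (hconv : Convex ℝ T)
    (hcone : ∀ (c : ℝ), 0 ≤ c → ∀ v ∈ T, c • v ∈ T)
    (hint : (interior T).Nonempty) :
    ∃ fil : ℝ, ∀ x y : V, ∃ k ∈ Γ, ‖x - (y + k)‖ ≤ fil ∧ (y + k) - x ∈ T :=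
  stmt_13_general V Γ hcocompact T hcone hint
end

section
/- Let 𝔩 : 𝔗 → [0,∞) be positively homogeneous of degree one and superadditive (𝔩(v+w) ≥ 𝔩(v) + 𝔩(w)) on a convex cone 𝔗, and suppose v_0, …, v_k ∈ 𝔗 satisfy 𝔩(v_i) = 1 for all i and 𝔩(v_0 + ⋯ + v_k) ≤ k + 1 + δ. Then for all t_0, …, t_k ≥ 0 with Σ t_i = 1 one has 𝔩(Σ t_i v_i) ≤ 1 + δ. -/
/-!
Split `∑ vᵢ = ∑ tᵢ vᵢ + ∑ (1 - tᵢ) vᵢ`. Superadditivity and homogeneity bound `𝔩` of the second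
summand below by `∑ (1 - tᵢ) = k`, and superadditivity once more gives
`𝔩(∑ tᵢ vᵢ) + k ≤ 𝔩(∑ vᵢ) ≤ k + 1 + δ`.
-/

section SuperadditiveOnCone

variable {V ι : Type*} [AddCommMonoid V] {T : Set V}

theorem sum_le_apply_sum_of_superadditiveOn (l : V → ℝ)
    (hadd : ∀ a ∈ T, ∀ b ∈ T, a + b ∈ T) (hsuper : ∀ v ∈ T, ∀ w ∈ T, l v + l w ≤ l (v + w))
    {s : Finset ι} (hs : s.Nonempty) (f : ι → V) (hf : ∀ i ∈ s, f i ∈ T) :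
    ∑ i ∈ s, l (f i) ≤ l (∑ i ∈ s, f i) := by
  have hsub := Finset.le_sum_nonempty_of_subadditive_on_pred (fun x => -l x) (· ∈ T)
    (fun x y hx hy => by linarith [hsuper x hx y hy])
    (fun x y hx hy => hadd x hx y hy) f s hs hf
  simpa only [Finset.sum_neg_distrib, neg_le_neg_iff] using hsub

variable [Module ℝ V]

theorem Convex.add_mem_of_smul_mem (hconv : Convex ℝ T)
    (hcone : ∀ c : ℝ, 0 ≤ c → ∀ v ∈ T, c • v ∈ T) {a b : V} (ha : a ∈ T) (hb : b ∈ T) :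
    a + b ∈ T := by
  have hmid : (2⁻¹ : ℝ) • a + (2⁻¹ : ℝ) • b ∈ T :=
    hconv ha hb (by norm_num) (by norm_num) (by norm_num)
  simpa [smul_add, smul_smul] using hcone 2 zero_le_two _ hmid

theorem Convex.sum_smul_mem_of_smul_mem (hconv : Convex ℝ T)
    (hcone : ∀ c : ℝ, 0 ≤ c → ∀ v ∈ T, c • v ∈ T) {s : Finset ι} (hs : s.Nonempty)
    (c : ι → ℝ) (hc : ∀ i ∈ s, 0 ≤ c i) (v : ι → V) (hv : ∀ i ∈ s, v i ∈ T) :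
    ∑ i ∈ s, c i • v i ∈ T :=
  Finset.sum_induction_nonempty _ (· ∈ T) (fun _ _ ha hb => hconv.add_mem_of_smul_mem hcone ha hb)
    hs fun i hi => hcone _ (hc i hi) _ (hv i hi)

theorem sum_mul_le_apply_sum_smul (hconv : Convex ℝ T)
    (hcone : ∀ c : ℝ, 0 ≤ c → ∀ v ∈ T, c • v ∈ T) (l : V → ℝ)
    (hhom : ∀ c : ℝ, 0 ≤ c → ∀ v ∈ T, l (c • v) = c * l v)
    (hsuper : ∀ v ∈ T, ∀ w ∈ T, l v + l w ≤ l (v + w))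
    {s : Finset ι} (hs : s.Nonempty) (c : ι → ℝ) (hc : ∀ i ∈ s, 0 ≤ c i)
    (v : ι → V) (hv : ∀ i ∈ s, v i ∈ T) :
    ∑ i ∈ s, c i * l (v i) ≤ l (∑ i ∈ s, c i • v i) := by
  calc ∑ i ∈ s, c i * l (v i) = ∑ i ∈ s, l (c i • v i) :=
        Finset.sum_congr rfl fun i hi => (hhom _ (hc i hi) _ (hv i hi)).symm
    _ ≤ l (∑ i ∈ s, c i • v i) :=
        sum_le_apply_sum_of_superadditiveOn l
          (fun _ ha _ hb => hconv.add_mem_of_smul_mem hcone ha hb) hsuper hs _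
          fun i hi => hcone _ (hc i hi) _ (hv i hi)

end SuperadditiveOnCone

theorem stmt_14_general (V : Type*) [AddCommGroup V] [Module ℝ V] (T : Set V)
    (hconv : Convex ℝ T) (hcone : ∀ (c : ℝ), 0 ≤ c → ∀ v ∈ T, c • v ∈ T)
    (l : V → ℝ)
    (hhom : ∀ (c : ℝ), 0 ≤ c → ∀ v ∈ T, l (c • v) = c * l v)
    (hsuper : ∀ v ∈ T, ∀ w ∈ T, l v + l w ≤ l (v + w))
    (k : ℕ) (δ : ℝ) (v : Fin (k + 1) → V)
    (hvT : ∀ i, v i ∈ T) (hl1 : ∀ i, l (v i) = 1)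
    (hsum : l (∑ i, v i) ≤ (k : ℝ) + 1 + δ)
    (t : Fin (k + 1) → ℝ) (ht : ∀ i, 0 ≤ t i) (htsum : ∑ i, t i = 1) :
    l (∑ i, t i • v i) ≤ 1 + δ := by
  have hs : (Finset.univ : Finset (Fin (k + 1))).Nonempty := Finset.univ_nonempty
  have hrest : ∀ i, 0 ≤ 1 - t i := fun i => by
    linarith [htsum ▸ Finset.single_le_sum (fun j _ => ht j) (Finset.mem_univ i)]
  have hsplit : ∑ i, v i = ∑ i, t i • v i + ∑ i, (1 - t i) • v i := by
    simp only [← Finset.sum_add_distrib, ← add_smul, add_sub_cancel, one_smul]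
  have hrest_lower : (k : ℝ) ≤ l (∑ i, (1 - t i) • v i) := by
    have h := sum_mul_le_apply_sum_smul hconv hcone l hhom hsuper hs _ (fun i _ => hrest i) v
      fun i _ => hvT i
    simpa [hl1, Finset.sum_sub_distrib, htsum] using h
  have hsplit_super := hsuper _
    (hconv.sum_smul_mem_of_smul_mem hcone hs t (fun i _ => ht i) v fun i _ => hvT i) _
    (hconv.sum_smul_mem_of_smul_mem hcone hs _ (fun i _ => hrest i) v fun i _ => hvT i)
  rw [← hsplit] at hsplit_super
  linarith

theorem stmt_14 (V : Type*) [AddCommGroup V] [Module ℝ V] (T : Set V)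
    (hconv : Convex ℝ T) (hcone : ∀ (c : ℝ), 0 ≤ c → ∀ v ∈ T, c • v ∈ T)
    (l : V → ℝ) (hnonneg : ∀ v ∈ T, 0 ≤ l v)
    (hhom : ∀ (c : ℝ), 0 ≤ c → ∀ v ∈ T, l (c • v) = c * l v)
    (hsuper : ∀ v ∈ T, ∀ w ∈ T, l v + l w ≤ l (v + w))
    (k : ℕ) (δ : ℝ) (hδ : 0 ≤ δ) (v : Fin (k + 1) → V)
    (hvT : ∀ i, v i ∈ T) (hl1 : ∀ i, l (v i) = 1)
    (hsum : l (∑ i, v i) ≤ (k : ℝ) + 1 + δ)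
    (t : Fin (k + 1) → ℝ) (ht : ∀ i, 0 ≤ t i) (htsum : ∑ i, t i = 1) :
    l (∑ i, t i • v i) ≤ 1 + δ :=
  stmt_14_general V T hconv hcone l hhom hsuper k δ v hvT hl1 hsum t ht htsum
end

section
/- Suppose a function d : V × V → [0,∞) on a finite-dimensional vector space satisfies the reversed triangle inequality d(x,z) ≥ d(x,y) + d(y,z) whenever z − y, y − x ∈ 𝔗, and 𝔩(v) := lim_{n→∞} d(x, x+nv)/n exists for all v ∈ 𝔗, independently of x, with the convergence uniform on compact subsets of the interior of 𝔗. Then 𝔩 is superadditive on 𝔗: 𝔩(v+w) ≥ 𝔩(v) + 𝔩(w), and positively homogeneous of degree one. -/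
/-!
Superadditivity: by the reverse triangle inequality through `x + n • v`,
`d x (x + n • v) + d (x + n • v) (x + n • (v + w)) ≤ d x (x + n • (v + w))`,
and quasi-invariance replaces the middle term by `d x (x + n • w)` at a cost `M`,
which disappears after dividing by `n`.

Homogeneity: along a ray, `t ↦ d x (x + t • v)` is monotone, so `d x (x + t • v) / t`
converges along all real `t → ∞`, not just along the integers; evaluating this limit
along `t = n * c` gives `l (c • v) = c * l v`.
-/

open Filter Topology Set

theorem tendsto_div_atTop_of_monotoneOn {f : ℝ → ℝ} {L : ℝ} (hf : MonotoneOn f (Ici 0))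
    (h : Tendsto (fun n : ℕ => f n / n) atTop (𝓝 L)) :
    Tendsto (fun t => f t / t) atTop (𝓝 L) := by
  have along : ∀ k : ℝ → ℕ, Tendsto k atTop atTop →
      Tendsto (fun t => (k t : ℝ) / t) atTop (𝓝 1) →
      Tendsto (fun t => f (k t) / t) atTop (𝓝 L) := by
    intro k hk hratio
    have hprod := (h.comp hk).mul hratio
    rw [mul_one] at hprod
    refine hprod.congr' ?_
    filter_upwards [hk.eventually_ge_atTop 1, eventually_gt_atTop 0] with t hkt ht
    have hkt' : (0 : ℝ) < k t := by exact_mod_cast hkt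
    simp only [Function.comp]
    field_simp
  refine tendsto_of_tendsto_of_tendsto_of_le_of_le'
    (along _ tendsto_nat_floor_atTop tendsto_nat_floor_div_atTop)
    (along _ tendsto_nat_ceil_atTop tendsto_nat_ceil_div_atTop) ?_ ?_
  all_goals filter_upwards [eventually_gt_atTop 0] with t ht
  · exact div_le_div_of_nonneg_right
      (hf (mem_Ici.2 (Nat.cast_nonneg _)) ht.le (Nat.floor_le ht.le)) ht.le
  · exact div_le_div_of_nonneg_right
      (hf ht.le (mem_Ici.2 (Nat.cast_nonneg _)) (Nat.le_ceil t)) ht.le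

section TimeSeparation

variable {V : Type*} [AddCommGroup V] {T : Set V} {d : V → V → ℝ}

theorem d_add_d_le_d_add_add_const
    (hrev : ∀ x y z : V, y - x ∈ T → z - y ∈ T → d x y + d y z ≤ d x z)
    {M : ℝ} (hquasi : ∀ x x' : V, ∀ v ∈ T, |d x (x + v) - d x' (x' + v)| ≤ M)
    (x : V) {v w : V} (hv : v ∈ T) (hw : w ∈ T) :
    d x (x + v) + d x (x + w) ≤ d x (x + (v + w)) + M := by
  have hchain := hrev x (x + v) (x + v + w) (by simpa using hv) (by simpa using hw)
  have hshift := (abs_le.1 (hquasi (x + v) x w hw)).1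
  rw [← add_assoc]
  linarith

variable [Module ℝ V] {l : V → ℝ}

theorem add_mem_of_convex_of_smul_mem (hconv : Convex ℝ T)
    (hcone : ∀ c : ℝ, 0 ≤ c → ∀ v ∈ T, c • v ∈ T) {v w : V}
    (hv : v ∈ T) (hw : w ∈ T) :
    v + w ∈ T := by
  have hmid := hcone 2 zero_le_two _ (hconv hv hw (by norm_num : (0 : ℝ) ≤ 1 / 2)
    (by norm_num : (0 : ℝ) ≤ 1 / 2) (by norm_num))
  rwa [smul_add, smul_smul, smul_smul, show (2 : ℝ) * (1 / 2) = 1 by norm_num, one_smul,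
    one_smul] at hmid

theorem monotoneOn_d_ray (hcone : ∀ c : ℝ, 0 ≤ c → ∀ v ∈ T, c • v ∈ T)
    (hdnonneg : ∀ x y : V, 0 ≤ d x y)
    (hrev : ∀ x y z : V, y - x ∈ T → z - y ∈ T → d x y + d y z ≤ d x z)
    (x : V) {v : V} (hv : v ∈ T) :
    MonotoneOn (fun t : ℝ => d x (x + t • v)) (Ici 0) := by
  intro s hs t _ hst
  have hstep : x + t • v - (x + s • v) = (t - s) • v := by rw [sub_smul]; abel
  have hchain := hrev x (x + s • v) (x + t • v) (by simpa using hcone s hs v hv)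
    (by rw [hstep]; exact hcone _ (sub_nonneg.2 hst) v hv)
  linarith [hdnonneg (x + s • v) (x + t • v)]

theorem superadditive_of_tendsto (hconv : Convex ℝ T)
    (hcone : ∀ c : ℝ, 0 ≤ c → ∀ v ∈ T, c • v ∈ T)
    (hrev : ∀ x y z : V, y - x ∈ T → z - y ∈ T → d x y + d y z ≤ d x z)
    {M : ℝ} (hquasi : ∀ x x' : V, ∀ v ∈ T, |d x (x + v) - d x' (x' + v)| ≤ M) (x : V)
    (hlim : ∀ v ∈ T, Tendsto (fun n : ℕ => d x (x + (n : ℝ) • v) / n) atTop (𝓝 (l v)))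
    {v w : V} (hv : v ∈ T) (hw : w ∈ T) :
    l v + l w ≤ l (v + w) := by
  have hsum : Tendsto (fun n : ℕ => d x (x + (n : ℝ) • v) / n + d x (x + (n : ℝ) • w) / n
      - M / n) atTop (𝓝 (l v + l w - 0)) :=
    ((hlim v hv).add (hlim w hw)).sub (tendsto_const_div_atTop_nhds_zero_nat M)
  rw [sub_zero] at hsum
  refine le_of_tendsto_of_tendsto' hsum (hlim _ (add_mem_of_convex_of_smul_mem hconv hcone hv hw))
    fun n => ?_
  have hn : (0 : ℝ) ≤ n := n.cast_nonneg
  have key := d_add_d_le_d_add_add_const hrev hquasi x (hcone n hn v hv) (hcone n hn w hw)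
  rw [← smul_add] at key
  rw [← add_div, ← sub_div]
  exact div_le_div_of_nonneg_right (by linarith) hn

theorem homogeneous_of_tendsto (hcone : ∀ c : ℝ, 0 ≤ c → ∀ v ∈ T, c • v ∈ T)
    (hdnonneg : ∀ x y : V, 0 ≤ d x y)
    (hrev : ∀ x y z : V, y - x ∈ T → z - y ∈ T → d x y + d y z ≤ d x z) (x : V)
    (hlim : ∀ v ∈ T, Tendsto (fun n : ℕ => d x (x + (n : ℝ) • v) / n) atTop (𝓝 (l v)))
    {c : ℝ} (hc : 0 ≤ c) {v : V} (hv : v ∈ T) :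
    l (c • v) = c * l v := by
  rcases hc.eq_or_lt with rfl | hc
  · refine tendsto_nhds_unique (hlim _ (hcone 0 le_rfl v hv)) ?_
    simpa using tendsto_const_div_atTop_nhds_zero_nat (d x x)
  have hray := tendsto_div_atTop_of_monotoneOn (monotoneOn_d_ray hcone hdnonneg hrev x hv)
    (hlim v hv)
  have hscaled := (hray.comp (tendsto_natCast_atTop_atTop.atTop_mul_const hc)).const_mul c
  refine tendsto_nhds_unique (hlim _ (hcone c hc.le v hv)) (hscaled.congr' ?_)
  filter_upwards [eventually_gt_atTop 0] with n hn
  have hn' : (0 : ℝ) < n := by exact_mod_cast hn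
  simp only [Function.comp, smul_smul]
  field_simp

end TimeSeparation

theorem stmt_16_general (V : Type*) [NormedAddCommGroup V] [NormedSpace ℝ V]
    (T : Set V) (hconv : Convex ℝ T)
    (hcone : ∀ (c : ℝ), 0 ≤ c → ∀ v ∈ T, c • v ∈ T)
    (d : V → V → ℝ) (hdnonneg : ∀ x y : V, 0 ≤ d x y)
    (hrev : ∀ x y z : V, y - x ∈ T → z - y ∈ T → d x y + d y z ≤ d x z)
    (M : ℝ) (hquasi : ∀ x x' : V, ∀ v ∈ T, |d x (x + v) - d x' (x' + v)| ≤ M)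
    (l : V → ℝ)
    (hlim : ∀ x : V, ∀ v ∈ T,
      Filter.Tendsto (fun n : ℕ => d x (x + (n : ℝ) • v) / n) Filter.atTop (nhds (l v))) :
    (∀ v ∈ T, ∀ w ∈ T, l v + l w ≤ l (v + w)) ∧
      (∀ (c : ℝ), 0 ≤ c → ∀ v ∈ T, l (c • v) = c * l v) :=
  ⟨fun _ hv _ hw => superadditive_of_tendsto hconv hcone hrev hquasi 0 (hlim 0) hv hw,
    fun _ hc _ hv => homogeneous_of_tendsto hcone hdnonneg hrev 0 (hlim 0) hc hv⟩

theorem stmt_16 (V : Type*) [NormedAddCommGroup V] [NormedSpace ℝ V]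
    [FiniteDimensional ℝ V] (T : Set V) (hclosed : IsClosed T) (hconv : Convex ℝ T)
    (hcone : ∀ (c : ℝ), 0 ≤ c → ∀ v ∈ T, c • v ∈ T)
    (d : V → V → ℝ) (hdnonneg : ∀ x y : V, 0 ≤ d x y)
    (hrev : ∀ x y z : V, y - x ∈ T → z - y ∈ T → d x y + d y z ≤ d x z)
    (M : ℝ) (hquasi : ∀ x x' : V, ∀ v ∈ T, |d x (x + v) - d x' (x' + v)| ≤ M)
    (l : V → ℝ)
    (hlim : ∀ x : V, ∀ v ∈ T,
      Filter.Tendsto (fun n : ℕ => d x (x + (n : ℝ) • v) / n) Filter.atTop (nhds (l v))) :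
    (∀ v ∈ T, ∀ w ∈ T, l v + l w ≤ l (v + w)) ∧
      (∀ (c : ℝ), 0 ≤ c → ∀ v ∈ T, l (c • v) = c * l v) :=
  stmt_16_general V T hconv hcone d hdnonneg hrev M hquasi l hlim
end
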